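/- arXiv:2210.13585 — 3 statements merged into one kernel-verified Lean document; each statement's English description precedes it below -/
import Mathlib

section
/- Fix integers n ≥ 1 and m ≥ 1, let M be an (associative, possibly noncommutative) ℝ-algebra, and for each string p on n sites let α_p ∈ ℝ and A_p ∈ M. Then m^n · Σ_{(p,q) compatible} α_p α_q m^{|p| + |q| − |supp(p) ∪ supp(q)|} (A_p · A_q) = Σ_{r full string} (Σ_{p ⊳ r} α_p m^{|p|} A_p) · (Σ_{q ⊳ r} α_q m^{|q|} A_q), where the left-hand sum ranges over ordered pairs of compatible strings. -/
/-- A string `q` is covered by the full string `P` iff `q` agrees with `P` on its support. -/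
def covers {n m : ℕ} (q : Fin n → Option (Fin m)) (P : Fin n → Fin m) : Prop :=
  ∀ i : Fin n, q i ≠ none → q i = some (P i)

instance {n m : ℕ} (q : Fin n → Option (Fin m)) : DecidablePred (covers q) :=
  fun P => inferInstanceAs (Decidable (∀ i : Fin n, q i ≠ none → q i = some (P i)))

/-- The support of a string, as a finset. -/
def supp {n m : ℕ} (q : Fin n → Option (Fin m)) : Finset (Fin n) :=
  Finset.univ.filter (fun i : Fin n => q i ≠ none)

/-- The weight of a string: the cardinality of its support. -/
def wt {n m : ℕ} (q : Fin n → Option (Fin m)) : ℕ :=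
  (Finset.univ.filter (fun i : Fin n => q i ≠ none)).card

/-- Two strings are compatible iff they agree on the intersection of their supports. -/
def compatible {n m : ℕ} (p q : Fin n → Option (Fin m)) : Prop :=
  ∀ i : Fin n, p i ≠ none → q i ≠ none → p i = q i

instance {n m : ℕ} (p q : Fin n → Option (Fin m)) : Decidable (compatible p q) :=
  inferInstanceAs (Decidable (∀ i : Fin n, p i ≠ none → q i ≠ none → p i = q i))

lemma card_forced (n m : ℕ) (s : Finset (Fin n)) (P₀ : Fin n → Fin m) :
    (Finset.univ.filter (fun r : Fin n → Fin m => ∀ i ∈ s, r i = P₀ i)).card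
      = m ^ (n - s.card) := by
  rw [← Fintype.card_subtype]
  have e : {r : Fin n → Fin m // ∀ i ∈ s, r i = P₀ i} ≃ ({i : Fin n // i ∉ s} → Fin m) :=
    { toFun := fun r i => r.1 i.1
      invFun := fun g => ⟨fun i => if h : i ∈ s then P₀ i else g ⟨i, h⟩, by
        intro i hi; simp [hi]⟩
      left_inv := by
        rintro ⟨r, hr⟩
        ext i
        by_cases h : i ∈ s
        · simp [h, hr i h]
        · simp [h]
      right_inv := by
        intro g
        funext i
        simp [i.2] }
  rw [Fintype.card_congr e, Fintype.card_fun, Fintype.card_fin]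
  congr 1
  rw [Fintype.card_subtype]
  simp [Finset.filter_not, Finset.card_sdiff_of_subset (Finset.subset_univ s)]

lemma card_covers_both {n m : ℕ} (hm : 1 ≤ m) (p q : Fin n → Option (Fin m))
    (hpq : compatible p q) :
    (Finset.univ.filter (fun r : Fin n → Fin m => covers p r ∧ covers q r)).card
      = m ^ (n - (supp p ∪ supp q).card) := by
  have d : Fin m := ⟨0, hm⟩
  rw [← card_forced n m (supp p ∪ supp q) (fun i => ((p i).getD ((q i).getD d)))]
  congr 1
  ext r
  simp only [Finset.mem_filter, Finset.mem_univ, true_and]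
  constructor
  · rintro ⟨hp, hq⟩ i hi
    simp only [supp, Finset.mem_union, Finset.mem_filter, Finset.mem_univ, true_and] at hi
    show r i = ((p i).getD ((q i).getD d))
    cases hpv : p i with
    | some a =>
      have h1 := hp i (by simp [hpv])
      rw [hpv] at h1
      simp at h1
      simp [← h1]
    | none =>
      cases hqv : q i with
      | some b =>
        have h1 := hq i (by simp [hqv])
        rw [hqv] at h1
        simp at h1
        simp [← h1]
      | none => exact absurd hi (by simp [hpv, hqv])
  · intro h
    constructor
    · intro i hi
      have hiu : i ∈ supp p ∪ supp q := by
        simp [supp, Finset.mem_union, hi]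
      have h1 := h i hiu
      cases hpv : p i with
      | none => exact absurd hpv hi
      | some a =>
        have hra : r i = a := by rw [h1, hpv]; rfl
        rw [hra]
    · intro i hi
      have hiu : i ∈ supp p ∪ supp q := by
        simp [supp, Finset.mem_union, hi]
      have h1 := h i hiu
      cases hqv : q i with
      | none => exact absurd hqv hi
      | some b =>
        cases hpv : p i with
        | none =>
          have hrb : r i = b := by rw [h1, hpv, hqv]; rfl
          rw [hrb]
        | some a =>
          have hab := hpq i (by simp [hpv]) (by simp [hqv])
          rw [hpv, hqv] at hab
          have hra : r i = a := by rw [h1, hpv]; rfl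
          rw [hra]; exact hab.symm

lemma card_covers_none {n m : ℕ} (p q : Fin n → Option (Fin m))
    (hpq : ¬ compatible p q) :
    (Finset.univ.filter (fun r : Fin n → Fin m => covers p r ∧ covers q r)) = ∅ := by
  apply Finset.filter_false_of_mem
  rintro r _ ⟨hp, hq⟩
  exact hpq fun i hi hi' => (hp i hi).trans (hq i hi').symm

theorem stmt_4 (n m : ℕ) (hn : 1 ≤ n) (hm : 1 ≤ m)
    (M : Type*) [Ring M] [Algebra ℝ M]
    (α : (Fin n → Option (Fin m)) → ℝ) (A : (Fin n → Option (Fin m)) → M) :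
    ((m : ℝ) ^ n) •
        ∑ pq ∈ (Finset.univ :
            Finset ((Fin n → Option (Fin m)) × (Fin n → Option (Fin m)))).filter
            (fun pq => compatible pq.1 pq.2),
          (α pq.1 * α pq.2 *
              (m : ℝ) ^ (wt pq.1 + wt pq.2 - (supp pq.1 ∪ supp pq.2).card)) •
            (A pq.1 * A pq.2) =
      ∑ r : Fin n → Fin m,
        (∑ p ∈ Finset.univ.filter (fun p : Fin n → Option (Fin m) => covers p r),
            (α p * (m : ℝ) ^ wt p) • A p) *
          (∑ q ∈ Finset.univ.filter (fun q : Fin n → Option (Fin m) => covers q r),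
            (α q * (m : ℝ) ^ wt q) • A q) := by
  have hrhs :
      (∑ r : Fin n → Fin m,
        (∑ p ∈ Finset.univ.filter (fun p : Fin n → Option (Fin m) => covers p r),
            (α p * (m : ℝ) ^ wt p) • A p) *
          (∑ q ∈ Finset.univ.filter (fun q : Fin n → Option (Fin m) => covers q r),
            (α q * (m : ℝ) ^ wt q) • A q))
      = ∑ p : Fin n → Option (Fin m), ∑ q : Fin n → Option (Fin m),
          ((Finset.univ.filter (fun r : Fin n → Fin m => covers p r ∧ covers q r)).card) •
            (((α p * (m : ℝ) ^ wt p) • A p) * ((α q * (m : ℝ) ^ wt q) • A q)) := by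
    simp only [Finset.sum_mul_sum]
    rw [Finset.sum_comm' (s' := fun p => Finset.univ.filter (fun r : Fin n → Fin m => covers p r))
      (t' := Finset.univ) (by intro r p; simp [and_comm])]
    apply Finset.sum_congr rfl
    intro p _
    rw [Finset.sum_comm' (s' := fun q =>
        Finset.univ.filter (fun r : Fin n → Fin m => covers p r ∧ covers q r))
      (t' := Finset.univ) (by intro r q; simp)]
    apply Finset.sum_congr rfl
    intro q _
    rw [Finset.sum_const]
  rw [hrhs, Finset.smul_sum, Finset.sum_filter, Fintype.sum_prod_type]
  apply Finset.sum_congr rfl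
  intro p _
  apply Finset.sum_congr rfl
  intro q _
  by_cases hpq : compatible p q
  · rw [if_pos hpq, card_covers_both hm p q hpq]
    rw [smul_mul_smul_comm, smul_smul, ← Nat.cast_smul_eq_nsmul ℝ, smul_smul]
    congr 1
    push_cast
    have hu1 : (supp p ∪ supp q).card ≤ n := by
      simpa using Finset.card_le_card (Finset.subset_univ (supp p ∪ supp q))
    have hu2 : (supp p ∪ supp q).card ≤ wt p + wt q := by
      simpa [supp, wt] using Finset.card_union_le
        (Finset.univ.filter (fun i : Fin n => p i ≠ none))
        (Finset.univ.filter (fun i : Fin n => q i ≠ none))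
    have hx : n - (supp p ∪ supp q).card + (wt p + wt q)
        = n + (wt p + wt q - (supp p ∪ supp q).card) := by omega
    have hpow : (m:ℝ) ^ (n - (supp p ∪ supp q).card) * ((m:ℝ) ^ wt p * (m:ℝ) ^ wt q)
        = (m:ℝ) ^ n * (m:ℝ) ^ (wt p + wt q - (supp p ∪ supp q).card) := by
      calc (m:ℝ) ^ (n - (supp p ∪ supp q).card) * ((m:ℝ) ^ wt p * (m:ℝ) ^ wt q)
          = (m:ℝ) ^ (n - (supp p ∪ supp q).card + (wt p + wt q)) := by
            rw [pow_add, pow_add]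
        _ = (m:ℝ) ^ (n + (wt p + wt q - (supp p ∪ supp q).card)) := by rw [hx]
        _ = (m:ℝ) ^ n * (m:ℝ) ^ (wt p + wt q - (supp p ∪ supp q).card) := by
            rw [pow_add]
    linear_combination (-(α p * α q)) * hpow
  · rw [if_neg hpq, card_covers_none p q hpq]
    simp
end

section
/- Fix integers n ≥ 1 and m ≥ 1 and let t_p ≥ 0 be a nonnegative real number for each string p on n sites. Then Σ_{r full string} (Σ_{p ⊳ r} m^{|p|} t_p)² ≤ (m+1)^n · m^n · Σ_p t_p². -/
/-! Cauchy–Schwarz with weights `m ^ |p|` over the strings `p ⊳ r` gives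
`(∑_{p ⊳ r} m^|p| t_p)² ≤ (∑_{p ⊳ r} m^|p|) · ∑_{p ⊳ r} m^|p| t_p²`, and the first factor is
`(m + 1)^n` since each site is either free or fixed to `r i`. Summing over `r` and swapping the
sums, each `p` is covered by exactly `m^(n - |p|)` full strings, so its weight becomes `m^n`. -/

open Finset

section DoubleCounting

variable {α β M : Type*} [Fintype α] [Fintype β] [AddCommMonoid M]

theorem sum_sum_filter_rel_eq_sum_card_nsmul (R : α → β → Prop) [DecidableRel R] (f : α → M) :
    ∑ b, ∑ a ∈ univ.filter (R · b), f a = ∑ a, #(univ.filter (R a)) • f a := by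
  rw [sum_comm' (t' := univ) (s' := fun a => univ.filter (R a)) (by simp)]
  simp only [sum_const]

end DoubleCounting

section Strings

variable {n m : ℕ}

theorem covers_iff {q : Fin n → Option (Fin m)} {P : Fin n → Fin m} :
    covers q P ↔ ∀ i, q i = none ∨ q i = some (P i) :=
  forall_congr' fun _ => or_iff_not_imp_left.symm

theorem pow_wt_eq_prod {M : Type*} [CommMonoid M] (x : M) (q : Fin n → Option (Fin m)) :
    x ^ wt q = ∏ i, if q i = none then 1 else x := by
  rw [prod_ite, prod_const_one, one_mul, prod_const, wt, filter_not]

theorem filter_covered_by_eq_piFinset (P : Fin n → Fin m) :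
    univ.filter (covers · P) = Fintype.piFinset fun i => {none, some (P i)} := by
  ext q
  simp [covers_iff]

theorem filter_covering_eq_piFinset (q : Fin n → Option (Fin m)) :
    univ.filter (covers q) = Fintype.piFinset fun i => (q i).elim univ singleton := by
  ext P
  simp only [mem_filter, mem_univ, true_and, Fintype.mem_piFinset, covers_iff]
  refine forall_congr' fun i => ?_
  cases q i <;> simp [eq_comm]

theorem sum_covered_by_pow_wt {R : Type*} [CommSemiring R] (x : R) (P : Fin n → Fin m) :
    ∑ q ∈ univ.filter (covers · P), x ^ wt q = (1 + x) ^ n := by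
  simp_rw [filter_covered_by_eq_piFinset, pow_wt_eq_prod]
  rw [← prod_univ_sum (fun i => {none, some (P i)}) fun _ j => if j = none then 1 else x]
  refine (prod_congr rfl fun i _ => ?_).trans (Fin.prod_const n (1 + x))
  rw [sum_pair (by simp)]
  simp

theorem card_covering_mul_pow_wt (q : Fin n → Option (Fin m)) :
    #(univ.filter (covers q)) * m ^ wt q = m ^ n := by
  rw [filter_covering_eq_piFinset, Fintype.card_piFinset, pow_wt_eq_prod, ← prod_mul_distrib]
  refine (prod_congr rfl fun i _ => ?_).trans (Fin.prod_const n m)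
  cases q i <;> simp

end Strings

theorem stmt_5_general (n m : ℕ)
    (t : (Fin n → Option (Fin m)) → ℝ) :
    ∑ r : Fin n → Fin m,
        (∑ p ∈ Finset.univ.filter (fun p : Fin n → Option (Fin m) => covers p r),
          (m : ℝ) ^ wt p * t p) ^ 2 ≤
      ((m : ℝ) + 1) ^ n * (m : ℝ) ^ n * ∑ p : Fin n → Option (Fin m), t p ^ 2 := by
  have cauchy_schwarz (r : Fin n → Fin m) :
      (∑ p ∈ univ.filter (covers · r), (m : ℝ) ^ wt p * t p) ^ 2 ≤
        ((m : ℝ) + 1) ^ n * ∑ p ∈ univ.filter (covers · r), (m : ℝ) ^ wt p * t p ^ 2 := by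
    rw [add_comm, ← sum_covered_by_pow_wt _ r]
    exact sum_sq_le_sum_mul_sum_of_sq_le_mul _ (fun _ _ => by positivity)
      (fun _ _ => by positivity) fun _ _ => (by ring : _ = _).le
  calc _ ≤ ∑ r : Fin n → Fin m, ((m : ℝ) + 1) ^ n *
          ∑ p ∈ univ.filter (covers · r), (m : ℝ) ^ wt p * t p ^ 2 :=
        sum_le_sum fun r _ => cauchy_schwarz r
    _ = ((m : ℝ) + 1) ^ n * ∑ p, (#(univ.filter (covers p)) * (m : ℝ) ^ wt p) * t p ^ 2 := by
        simp_rw [← mul_sum, sum_sum_filter_rel_eq_sum_card_nsmul covers, nsmul_eq_mul, mul_assoc]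
    _ = _ := by
        simp_rw [← Nat.cast_pow, ← Nat.cast_mul, card_covering_mul_pow_wt, ← mul_sum,
          Nat.cast_pow, mul_assoc]

theorem stmt_5 (n m : ℕ) (hn : 1 ≤ n) (hm : 1 ≤ m)
    (t : (Fin n → Option (Fin m)) → ℝ) (ht : ∀ p, 0 ≤ t p) :
    ∑ r : Fin n → Fin m,
        (∑ p ∈ Finset.univ.filter (fun p : Fin n → Option (Fin m) => covers p r),
          (m : ℝ) ^ wt p * t p) ^ 2 ≤
      ((m : ℝ) + 1) ^ n * (m : ℝ) ^ n * ∑ p : Fin n → Option (Fin m), t p ^ 2 :=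
  stmt_5_general n m t
end

section
/- Fix integers k ≥ 1, m ≥ 1 and N ≥ 1. Let ρ be an N×N complex positive semidefinite matrix with trace 1, and for each string p on k sites let α_p ∈ ℝ and let A_p be an N×N Hermitian matrix. Then the sum Σ_{(p,q) compatible} α_p α_q m^{|supp(p) ∩ supp(q)|} tr(ρ A_p A_q), taken over ordered pairs of compatible strings, is a nonnegative real number and satisfies Σ_{(p,q) compatible} α_p α_q m^{|supp(p) ∩ supp(q)|} tr(ρ A_p A_q) ≤ (m+1)^k · Σ_p α_p² ‖A_p‖_∞², where ‖·‖_∞ denotes the spectral (operator) norm. -/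
open scoped ComplexOrder

/-!
Let `coverWeight p s = m ^ |supp p|` if the choice `s` of one of `m` local bases per site agrees
with `p` on `supp p`, and `0` otherwise. Then `∑ s, coverWeight p s * coverWeight q s` equals
`m ^ k * m ^ |supp p ∩ supp q|` for compatible `p, q` and vanishes otherwise, so `m ^ k` times the
compatible-pair sum is `∑ s, tr(ρ C_s²)` with `C_s = ∑ p, α p * coverWeight p s • A p` Hermitian.
For a density matrix `ρ`, each `tr(ρ C_s²)` lies in `[0, ‖C_s‖²]`. The triangle and
Cauchy–Schwarz inequalities give
`‖C_s‖² ≤ (∑ p, coverWeight p s) * ∑ p, coverWeight p s * α p ^ 2 * ‖A p‖ ^ 2`, where the first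
factor is `(m + 1) ^ k`, and summing over `s` turns `coverWeight p s` into `m ^ k`.
-/

open Finset Matrix

namespace Matrix

open scoped MatrixOrder

variable {𝕜 n : Type*} [RCLike 𝕜] [Fintype n]

lemma trace_mul_sum_smul_mul_sum_smul {R ι : Type*} [CommSemiring R] [Fintype ι]
    (ρ : Matrix n n R) (A : ι → Matrix n n R) (c d : ι → R) :
    (ρ * (∑ i, c i • A i) * ∑ j, d j • A j).trace =
      ∑ i, ∑ j, c i * d j * (ρ * A i * A j).trace := by
  simp only [Matrix.sum_mul, Matrix.mul_smul, Matrix.smul_mul, trace_sum, trace_smul, smul_eq_mul,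
    Finset.mul_sum]
  rw [Finset.sum_comm]
  exact Finset.sum_congr rfl fun i _ => Finset.sum_congr rfl fun j _ => by ring

lemma norm_toEuclideanCLM_sum_smul_le [DecidableEq n] {ι : Type*} [Fintype ι] (c : ι → 𝕜)
    (A : ι → Matrix n n 𝕜) :
    ‖toEuclideanCLM (𝕜 := 𝕜) (∑ i, c i • A i)‖ ≤ ∑ i, ‖c i‖ * ‖toEuclideanCLM (𝕜 := 𝕜) (A i)‖ := by
  rw [map_sum]
  exact (norm_sum_le _ _).trans_eq (by simp only [map_smul, norm_smul])

lemma PosSemidef.trace_mul_nonneg {ρ M : Matrix n n 𝕜} (hρ : ρ.PosSemidef) (hM : M.PosSemidef) :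
    0 ≤ (ρ * M).trace := by
  classical
  obtain ⟨B, rfl⟩ := CStarAlgebra.nonneg_iff_eq_star_mul_self.mp hρ.nonneg
  rw [Matrix.mul_assoc, trace_mul_comm, star_eq_conjTranspose]
  exact (hM.mul_mul_conjTranspose_same B).trace_nonneg

lemma PosSemidef.trace_mul_le_trace_mul {ρ M M' : Matrix n n 𝕜} (hρ : ρ.PosSemidef)
    (h : M ≤ M') : (ρ * M).trace ≤ (ρ * M').trace := by
  have := hρ.trace_mul_nonneg (le_iff.mp h)
  rwa [Matrix.mul_sub, trace_sub, sub_nonneg] at this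

open scoped Norms.L2Operator in
lemma PosSemidef.trace_mul_conjTranspose_mul_self_mem_Icc [DecidableEq n] {ρ : Matrix n n ℂ}
    (hρ : ρ.PosSemidef) (hρtr : ρ.trace = 1) (H : Matrix n n ℂ) :
    0 ≤ (ρ * Hᴴ * H).trace ∧
      (ρ * Hᴴ * H).trace ≤ ((‖toEuclideanCLM (𝕜 := ℂ) H‖ ^ 2 : ℝ) : ℂ) := by
  rw [Matrix.mul_assoc]
  refine ⟨hρ.trace_mul_nonneg (posSemidef_conjTranspose_mul_self H), ?_⟩
  calc (ρ * (Hᴴ * H)).trace ≤ (ρ * algebraMap ℝ _ (‖H‖ ^ 2)).trace :=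
        hρ.trace_mul_le_trace_mul CStarAlgebra.star_mul_le_algebraMap_norm_sq
    _ = _ := by
      rw [Algebra.algebraMap_eq_smul_one, Matrix.mul_smul, Matrix.mul_one, trace_smul, hρtr,
        cstar_norm_def]
      simp

end Matrix

section CoverWeight

variable {k m : ℕ}

def siteCoverWeight : Option (Fin m) → Fin m → ℝ
  | none, _ => 1
  | some b, a => if a = b then m else 0

def coverWeight (p : Fin k → Option (Fin m)) (s : Fin k → Fin m) : ℝ :=
  ∏ i, siteCoverWeight (p i) (s i)

lemma siteCoverWeight_nonneg (o : Option (Fin m)) (a : Fin m) : 0 ≤ siteCoverWeight o a := by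
  cases o <;> simp only [siteCoverWeight] <;> positivity

lemma coverWeight_nonneg (p : Fin k → Option (Fin m)) (s : Fin k → Fin m) :
    0 ≤ coverWeight p s :=
  prod_nonneg fun i _ => siteCoverWeight_nonneg (p i) (s i)

lemma sum_siteCoverWeight_mul_siteCoverWeight (o o' : Option (Fin m)) :
    ∑ a, siteCoverWeight o a * siteCoverWeight o' a =
      if o ≠ none → o' ≠ none → o = o' then m * if o ≠ none ∧ o' ≠ none then (m : ℝ) else 1
      else 0 := by
  rcases o with _ | b <;> rcases o' with _ | b' <;> simp [siteCoverWeight]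
  exact if_congr eq_comm rfl rfl

lemma sum_coverWeight_mul_coverWeight (p q : Fin k → Option (Fin m)) :
    ∑ s, coverWeight p s * coverWeight q s =
      if compatible p q then (m : ℝ) ^ k * (m : ℝ) ^ (supp p ∩ supp q).card else 0 := by
  calc ∑ s, coverWeight p s * coverWeight q s
      = ∏ i, ∑ a, siteCoverWeight (p i) a * siteCoverWeight (q i) a := by
        simp only [coverWeight, ← prod_mul_distrib]
        exact (Fintype.prod_sum fun i a => siteCoverWeight (p i) a * siteCoverWeight (q i) a).symm
    _ = _ := by
      simp only [sum_siteCoverWeight_mul_siteCoverWeight, Fintype.prod_ite_zero, prod_mul_distrib,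
        prod_const, card_univ, Fintype.card_fin, ← prod_filter, supp, filter_and]
      rfl

lemma sum_coverWeight_eq_pow_succ (s : Fin k → Fin m) :
    ∑ p, coverWeight p s = ((m : ℝ) + 1) ^ k := by
  have hsite : ∀ a : Fin m, ∑ o, siteCoverWeight o a = m + 1 := by
    intro a
    simp [Fintype.sum_option, siteCoverWeight, add_comm]
  simp only [coverWeight]
  rw [← Fintype.prod_sum (fun i o => siteCoverWeight o (s i))]
  simp [hsite]

lemma sum_coverWeight (p : Fin k → Option (Fin m)) : ∑ s, coverWeight p s = (m : ℝ) ^ k := by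
  have hsite : ∀ o : Option (Fin m), ∑ a, siteCoverWeight o a = m := by
    rintro (_ | b) <;> simp [siteCoverWeight]
  simp only [coverWeight]
  rw [← Fintype.prod_sum (fun i a => siteCoverWeight (p i) a)]
  simp [hsite]

lemma sum_sum_coverWeight_mul (f : (Fin k → Option (Fin m)) → ℝ) :
    ∑ s, ∑ p, coverWeight p s * f p = (m : ℝ) ^ k * ∑ p, f p := by
  rw [sum_comm, mul_sum]
  exact sum_congr rfl fun p _ => by rw [← sum_mul, sum_coverWeight]

end CoverWeight

section CompatiblePairSum

variable {k m N : ℕ} (ρ : Matrix (Fin N) (Fin N) ℂ) (α : (Fin k → Option (Fin m)) → ℝ)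
  (A : (Fin k → Option (Fin m)) → Matrix (Fin N) (Fin N) ℂ)

def compatiblePairSum : ℂ :=
  ∑ pq ∈ (Finset.univ :
      Finset ((Fin k → Option (Fin m)) × (Fin k → Option (Fin m)))).filter
      (fun pq => compatible pq.1 pq.2),
    ((α pq.1 * α pq.2 * (m : ℝ) ^ (supp pq.1 ∩ supp pq.2).card : ℝ) : ℂ) *
      (ρ * A pq.1 * A pq.2).trace

def shadowObservable (s : Fin k → Fin m) : Matrix (Fin N) (Fin N) ℂ :=
  ∑ p, ((α p * coverWeight p s : ℝ) : ℂ) • A p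

lemma sum_trace_mul_shadowObservable_mul_self :
    ∑ s, (ρ * shadowObservable α A s * shadowObservable α A s).trace =
      ((m : ℝ) ^ k : ℝ) * compatiblePairSum ρ α A := by
  simp only [shadowObservable, trace_mul_sum_smul_mul_sum_smul]
  simp only [compatiblePairSum, sum_filter, Fintype.sum_prod_type, mul_sum]
  rw [sum_comm]
  refine sum_congr rfl fun p _ => ?_
  rw [sum_comm]
  refine sum_congr rfl fun q _ => ?_
  have hweight : ∑ s, ((α p * coverWeight p s : ℝ) : ℂ) * ((α q * coverWeight q s : ℝ) : ℂ) =
      ((α p * α q * ∑ s, coverWeight p s * coverWeight q s : ℝ) : ℂ) := by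
    push_cast
    rw [mul_sum]
    exact sum_congr rfl fun s _ => by ring
  rw [← sum_mul, hweight, sum_coverWeight_mul_coverWeight]
  split_ifs <;> push_cast <;> ring

variable {α A} in
lemma isHermitian_shadowObservable (hA : ∀ p, (A p).IsHermitian) (s : Fin k → Fin m) :
    (shadowObservable α A s).IsHermitian :=
  isSelfAdjoint_sum _ fun p _ => (hA p).smul (Complex.conj_ofReal _)

lemma trace_mul_shadowObservable_mul_self_le (hρ : ρ.PosSemidef) (hρtr : ρ.trace = 1)
    (hA : ∀ p, (A p).IsHermitian) (s : Fin k → Fin m) :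
    0 ≤ (ρ * shadowObservable α A s * shadowObservable α A s).trace ∧
    (ρ * shadowObservable α A s * shadowObservable α A s).trace ≤
      (((m : ℝ) + 1) ^ k * ∑ p, coverWeight p s *
        (α p ^ 2 * ‖toEuclideanCLM (𝕜 := ℂ) (A p)‖ ^ 2) : ℝ) := by
  set C := shadowObservable α A s
  have hC : Cᴴ = C := isHermitian_shadowObservable hA s
  obtain ⟨h0, h1⟩ := hρ.trace_mul_conjTranspose_mul_self_mem_Icc hρtr C
  rw [hC] at h0 h1
  refine ⟨h0, h1.trans (Complex.real_le_real.mpr ?_)⟩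
  have hnorm : ‖toEuclideanCLM (𝕜 := ℂ) C‖ ≤
      ∑ p, coverWeight p s * (|α p| * ‖toEuclideanCLM (𝕜 := ℂ) (A p)‖) := by
    refine (norm_toEuclideanCLM_sum_smul_le _ _).trans_eq (sum_congr rfl fun p _ => ?_)
    rw [Complex.norm_real, Real.norm_eq_abs, abs_mul, abs_of_nonneg (coverWeight_nonneg p s)]
    ring
  calc ‖toEuclideanCLM (𝕜 := ℂ) C‖ ^ 2
      ≤ (∑ p, coverWeight p s * (|α p| * ‖toEuclideanCLM (𝕜 := ℂ) (A p)‖)) ^ 2 := by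
        gcongr
    _ ≤ (∑ p, coverWeight p s) *
          ∑ p, coverWeight p s * (α p ^ 2 * ‖toEuclideanCLM (𝕜 := ℂ) (A p)‖ ^ 2) := by
        refine sum_sq_le_sum_mul_sum_of_sq_le_mul _ (fun p _ => coverWeight_nonneg p s)
          (fun p _ => mul_nonneg (coverWeight_nonneg p s) (by positivity)) fun p _ => le_of_eq ?_
        rw [mul_pow, mul_pow, sq_abs]
        ring
    _ = _ := by rw [sum_coverWeight_eq_pow_succ]

lemma compatiblePairSum_mem_Icc (hm : 1 ≤ m) (hρ : ρ.PosSemidef) (hρtr : ρ.trace = 1)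
    (hA : ∀ p, (A p).IsHermitian) :
    0 ≤ compatiblePairSum ρ α A ∧ compatiblePairSum ρ α A ≤
      (((m : ℝ) + 1) ^ k *
        ∑ p, α p ^ 2 * ‖toEuclideanCLM (𝕜 := ℂ) (A p)‖ ^ 2 : ℝ) := by
  have hmk : (((m : ℝ) ^ k : ℝ) : ℂ) ≠ 0 := by
    exact_mod_cast (pow_pos (Nat.cast_pos.mpr hm) k).ne'
  have hinv : (0 : ℂ) ≤ (((m : ℝ) ^ k : ℝ) : ℂ)⁻¹ := by
    rw [← Complex.ofReal_inv, Complex.zero_le_real]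
    positivity
  have hsum : compatiblePairSum ρ α A = (((m : ℝ) ^ k : ℝ) : ℂ)⁻¹ *
      ∑ s, (ρ * shadowObservable α A s * shadowObservable α A s).trace := by
    rw [sum_trace_mul_shadowObservable_mul_self, inv_mul_cancel_left₀ hmk]
  have hbound := trace_mul_shadowObservable_mul_self_le ρ α A hρ hρtr hA
  constructor
  · rw [hsum]
    exact mul_nonneg hinv (sum_nonneg fun s _ => (hbound s).1)
  · calc compatiblePairSum ρ α A
        ≤ (((m : ℝ) ^ k : ℝ) : ℂ)⁻¹ * ∑ s, ((((m : ℝ) + 1) ^ k * ∑ p, coverWeight p s *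
            (α p ^ 2 * ‖toEuclideanCLM (𝕜 := ℂ) (A p)‖ ^ 2) : ℝ) : ℂ) := by
          rw [hsum]
          exact mul_le_mul_of_nonneg_left (sum_le_sum fun s _ => (hbound s).2) hinv
      _ = _ := by
          rw [← Complex.ofReal_sum, ← mul_sum, sum_sum_coverWeight_mul, Complex.ofReal_mul,
            Complex.ofReal_mul, mul_left_comm, inv_mul_cancel_left₀ hmk]
          push_cast
          ring

end CompatiblePairSum

theorem stmt_6_general (k m N : ℕ) (hm : 1 ≤ m)
    (ρ : Matrix (Fin N) (Fin N) ℂ) (hρ : ρ.PosSemidef) (hρtr : ρ.trace = 1)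
    (α : (Fin k → Option (Fin m)) → ℝ)
    (A : (Fin k → Option (Fin m)) → Matrix (Fin N) (Fin N) ℂ)
    (hA : ∀ p, (A p).IsHermitian) :
    (∑ pq ∈ (Finset.univ :
        Finset ((Fin k → Option (Fin m)) × (Fin k → Option (Fin m)))).filter
        (fun pq => compatible pq.1 pq.2),
      ((α pq.1 * α pq.2 * (m : ℝ) ^ (supp pq.1 ∩ supp pq.2).card : ℝ) : ℂ) *
        (ρ * A pq.1 * A pq.2).trace).im = 0 ∧
    0 ≤ (∑ pq ∈ (Finset.univ :
        Finset ((Fin k → Option (Fin m)) × (Fin k → Option (Fin m)))).filter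
        (fun pq => compatible pq.1 pq.2),
      ((α pq.1 * α pq.2 * (m : ℝ) ^ (supp pq.1 ∩ supp pq.2).card : ℝ) : ℂ) *
        (ρ * A pq.1 * A pq.2).trace).re ∧
    (∑ pq ∈ (Finset.univ :
        Finset ((Fin k → Option (Fin m)) × (Fin k → Option (Fin m)))).filter
        (fun pq => compatible pq.1 pq.2),
      ((α pq.1 * α pq.2 * (m : ℝ) ^ (supp pq.1 ∩ supp pq.2).card : ℝ) : ℂ) *
        (ρ * A pq.1 * A pq.2).trace).re ≤
      ((m : ℝ) + 1) ^ k *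
        ∑ p : Fin k → Option (Fin m),
          α p ^ 2 * ‖Matrix.toEuclideanCLM (𝕜 := ℂ) (A p)‖ ^ 2 := by
  obtain ⟨hnonneg, hle⟩ := compatiblePairSum_mem_Icc ρ α A hm hρ hρtr hA
  obtain ⟨hre, him⟩ := Complex.nonneg_iff.mp hnonneg
  exact ⟨him.symm, hre, (Complex.le_def.mp hle).1⟩

theorem stmt_6 (k m N : ℕ) (hk : 1 ≤ k) (hm : 1 ≤ m) (hN : 1 ≤ N)
    (ρ : Matrix (Fin N) (Fin N) ℂ) (hρ : ρ.PosSemidef) (hρtr : ρ.trace = 1)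
    (α : (Fin k → Option (Fin m)) → ℝ)
    (A : (Fin k → Option (Fin m)) → Matrix (Fin N) (Fin N) ℂ)
    (hA : ∀ p, (A p).IsHermitian) :
    (∑ pq ∈ (Finset.univ :
        Finset ((Fin k → Option (Fin m)) × (Fin k → Option (Fin m)))).filter
        (fun pq => compatible pq.1 pq.2),
      ((α pq.1 * α pq.2 * (m : ℝ) ^ (supp pq.1 ∩ supp pq.2).card : ℝ) : ℂ) *
        (ρ * A pq.1 * A pq.2).trace).im = 0 ∧
    0 ≤ (∑ pq ∈ (Finset.univ :
        Finset ((Fin k → Option (Fin m)) × (Fin k → Option (Fin m)))).filter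
        (fun pq => compatible pq.1 pq.2),
      ((α pq.1 * α pq.2 * (m : ℝ) ^ (supp pq.1 ∩ supp pq.2).card : ℝ) : ℂ) *
        (ρ * A pq.1 * A pq.2).trace).re ∧
    (∑ pq ∈ (Finset.univ :
        Finset ((Fin k → Option (Fin m)) × (Fin k → Option (Fin m)))).filter
        (fun pq => compatible pq.1 pq.2),
      ((α pq.1 * α pq.2 * (m : ℝ) ^ (supp pq.1 ∩ supp pq.2).card : ℝ) : ℂ) *
        (ρ * A pq.1 * A pq.2).trace).re ≤
      ((m : ℝ) + 1) ^ k *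
        ∑ p : Fin k → Option (Fin m),
          α p ^ 2 * ‖Matrix.toEuclideanCLM (𝕜 := ℂ) (A p)‖ ^ 2 :=
  stmt_6_general k m N hm ρ hρ hρtr α A hA
end
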